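/- arXiv:2402.18149 — 4 statements merged into one kernel-verified Lean document; each statement's English description precedes it below -/
import Mathlib

section
/- Let Z be a finite nonempty set, K ≥ 1 an integer, and ẑ¹, …, ẑᴷ ∈ Z a sequence. For k = 0, 1, …, K define the counter N^{k+1}(z) := #{ t ∈ {1,…,k} : ẑᵗ = z }. Then ∑_{k=1}^{K} 1/√(max{1, N^{k+1}(ẑᵏ)}) < 2·√(K·|Z|). -/
open Finset

lemma fiber_bound' {Z : Type*} [DecidableEq Z] (z : ℕ → Z) (K : ℕ) (v : Z) :
    ∑ k ∈ (Finset.Icc 1 K).filter (fun k => z k = v),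
        1 / Real.sqrt ((max 1 (((Finset.Icc 1 k).filter (fun t => z t = z k)).card) : ℕ)) ≤
      ∑ j ∈ Finset.Icc 1 (((Finset.Icc 1 K).filter (fun k => z k = v)).card),
        1 / Real.sqrt j := by
  have step : ∀ k ∈ (Finset.Icc 1 K).filter (fun k => z k = v),
      1 / Real.sqrt ((max 1 (((Finset.Icc 1 k).filter (fun t => z t = z k)).card) : ℕ)) =
        1 / Real.sqrt (((Finset.Icc 1 k).filter (fun t => z t = v)).card) := by
    intro k hk
    simp only [Finset.mem_filter, Finset.mem_Icc] at hk
    have hz : z k = v := hk.2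
    have h1 : k ∈ (Finset.Icc 1 k).filter (fun t => z t = v) := by
      simp only [Finset.mem_filter, Finset.mem_Icc]
      exact ⟨⟨hk.1.1, le_refl k⟩, hz⟩
    have hpos : 1 ≤ ((Finset.Icc 1 k).filter (fun t => z t = v)).card :=
      Finset.card_pos.2 ⟨k, h1⟩
    simp only [hz]
    rw [max_eq_right hpos]
  rw [Finset.sum_congr rfl step]
  clear step
  set S := (Finset.Icc 1 K).filter (fun k => z k = v) with hS
  have hmem : ∀ k ∈ S, 1 ≤ k ∧ k ≤ K ∧ z k = v := by
    intro k hk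
    simp only [hS, Finset.mem_filter, Finset.mem_Icc] at hk
    exact ⟨hk.1.1, hk.1.2, hk.2⟩
  have hNge : ∀ k ∈ S, 1 ≤ ((Finset.Icc 1 k).filter (fun t => z t = v)).card := by
    intro k hk
    obtain ⟨h1, _, h3⟩ := hmem k hk
    refine Finset.card_pos.2 ⟨k, ?_⟩
    simp only [Finset.mem_filter, Finset.mem_Icc]
    exact ⟨⟨h1, le_refl k⟩, h3⟩
  have hNle : ∀ k ∈ S, ((Finset.Icc 1 k).filter (fun t => z t = v)).card ≤ S.card := by
    intro k hk
    obtain ⟨h1, h2, _⟩ := hmem k hk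
    apply Finset.card_le_card
    intro t ht
    simp only [hS, Finset.mem_filter, Finset.mem_Icc] at ht ⊢
    exact ⟨⟨ht.1.1, ht.1.2.trans h2⟩, ht.2⟩
  have hinj : ∀ a ∈ S, ∀ b ∈ S,
      ((Finset.Icc 1 a).filter (fun t => z t = v)).card =
        ((Finset.Icc 1 b).filter (fun t => z t = v)).card → a = b := by
    have key : ∀ a ∈ S, ∀ b ∈ S, a < b →
        ((Finset.Icc 1 a).filter (fun t => z t = v)).card <
          ((Finset.Icc 1 b).filter (fun t => z t = v)).card := by
      intro a _ b hb hlt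
      apply Finset.card_lt_card
      refine ⟨Finset.filter_subset_filter _ (Finset.Icc_subset_Icc_right (by omega)), ?_⟩
      intro hcon
      obtain ⟨h1, _, h3⟩ := hmem b hb
      have hbmem : b ∈ (Finset.Icc 1 a).filter (fun t => z t = v) := by
        apply hcon
        simp only [Finset.mem_filter, Finset.mem_Icc]
        exact ⟨⟨h1, le_refl b⟩, h3⟩
      simp only [Finset.mem_filter, Finset.mem_Icc] at hbmem
      omega
    intro a ha b hb hab
    rcases lt_trichotomy a b with h | h | h
    · exact absurd hab (Nat.ne_of_lt (key a ha b hb h))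
    · exact h
    · exact absurd hab.symm (Nat.ne_of_lt (key b hb a ha h))
  calc ∑ k ∈ S, 1 / Real.sqrt (((Finset.Icc 1 k).filter (fun t => z t = v)).card)
      = ∑ j ∈ S.image (fun k => ((Finset.Icc 1 k).filter (fun t => z t = v)).card),
          1 / Real.sqrt j :=
        (Finset.sum_image (f := fun j : ℕ => 1 / Real.sqrt j) hinj).symm
    _ ≤ ∑ j ∈ Finset.Icc 1 S.card, 1 / Real.sqrt j := by
        apply Finset.sum_le_sum_of_subset_of_nonneg
        · intro j hj
          obtain ⟨k, hk, rfl⟩ := Finset.mem_image.1 hj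
          exact Finset.mem_Icc.2 ⟨hNge k hk, hNle k hk⟩
        · intro j _ _
          positivity

lemma cs_bound {Z : Type*} [Fintype Z] (m : Z → ℕ) :
    ∑ v : Z, Real.sqrt (m v) ≤
      Real.sqrt ((Fintype.card Z : ℝ) * ∑ v : Z, (m v : ℝ)) := by
  have h0 : (0:ℝ) ≤ ∑ v : Z, (m v : ℝ) :=
    Finset.sum_nonneg fun v _ => by positivity
  rw [Real.le_sqrt (Finset.sum_nonneg fun v _ => Real.sqrt_nonneg _) (by positivity)]
  calc (∑ v : Z, Real.sqrt (m v)) ^ 2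
      ≤ (Finset.univ.card : ℝ) * ∑ v : Z, Real.sqrt (m v) ^ 2 :=
        sq_sum_le_card_mul_sum_sq
    _ = (Fintype.card Z : ℝ) * ∑ v : Z, (m v : ℝ) := by
        rw [Finset.card_univ]
        congr 1
        exact Finset.sum_congr rfl fun v _ => Real.sq_sqrt (by positivity)

lemma count_sum {Z : Type*} [Fintype Z] [DecidableEq Z] (K : ℕ) (z : ℕ → Z) :
    ∑ v : Z, ((Finset.Icc 1 K).filter (fun k => z k = v)).card = K := by
  have h := Finset.card_eq_sum_card_fiberwise
    (f := z) (s := Finset.Icc 1 K) (t := Finset.univ) (fun x _ => Finset.mem_univ (z x))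
  rw [Nat.card_Icc, Nat.add_sub_cancel] at h
  exact h.symm
lemma sum_one_div_sqrt_le (m : ℕ) :
    ∑ j ∈ Finset.Icc 1 m, 1 / Real.sqrt j ≤
      2 * Real.sqrt m - (if 1 ≤ m then 1 else 0) := by
  induction m with
  | zero => simp
  | succ m ih =>
    rw [Finset.sum_Icc_succ_top (by omega)]
    have h4 : (0:ℝ) < Real.sqrt (m+1) := Real.sqrt_pos.2 (by positivity)
    have h1 : Real.sqrt m ^ 2 = m := Real.sq_sqrt (by positivity)
    have h2 : Real.sqrt (m+1) ^ 2 = (m:ℝ)+1 := Real.sq_sqrt (by positivity)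
    have h3 : (0:ℝ) ≤ Real.sqrt m := Real.sqrt_nonneg _
    have key : 1 / Real.sqrt (m+1) ≤ 2 * (Real.sqrt (m+1) - Real.sqrt m) := by
      rw [div_le_iff₀ h4]
      nlinarith [sq_nonneg (Real.sqrt (m+1) - Real.sqrt m)]
    rw [if_pos (by omega : 1 ≤ m + 1)]
    rcases Nat.eq_zero_or_pos m with hm | hm
    · subst hm
      norm_num
    · rw [if_pos (by omega : 1 ≤ m)] at ih
      push_cast at key ih ⊢
      linarith

/-- Pigeon-hole bound: for a sequence `ẑ¹,…,ẑᴷ` in a finite set `Z` with counters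
`N^{k+1}(z) = #{t ∈ {1,…,k} : ẑᵗ = z}`, one has
`∑_{k=1}^{K} 1/√(max{1, N^{k+1}(ẑᵏ)}) < 2·√(K·|Z|)`. -/
theorem counter_pigeonhole_bound {Z : Type*} [Fintype Z] [Nonempty Z] [DecidableEq Z]
    (K : ℕ) (hK : 1 ≤ K) (z : ℕ → Z) :
    ∑ k ∈ Finset.Icc 1 K,
        1 / Real.sqrt ((max 1 (((Finset.Icc 1 k).filter (fun t => z t = z k)).card) : ℕ)) <
      2 * Real.sqrt ((K : ℝ) * (Fintype.card Z : ℝ)) := by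
  classical
  rw [← Finset.sum_fiberwise_of_maps_to (fun x (_ : x ∈ Finset.Icc 1 K) => Finset.mem_univ (z x))
    (fun k => 1 / Real.sqrt ((max 1 (((Finset.Icc 1 k).filter (fun t => z t = z k)).card) : ℕ)))]
  have hcast : ∑ v : Z, ((((Finset.Icc 1 K).filter (fun k => z k = v)).card : ℕ) : ℝ) = K := by
    rw [← Nat.cast_sum, count_sum K z]
  have hCS := cs_bound (fun v => ((Finset.Icc 1 K).filter (fun k => z k = v)).card)
  rw [hcast] at hCS
  have hone : (1:ℝ) ≤ ∑ v : Z,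
      (if 1 ≤ ((Finset.Icc 1 K).filter (fun k => z k = v)).card then (1:ℝ) else 0) := by
    have h1 : 1 ≤ ((Finset.Icc 1 K).filter (fun k => z k = z 1)).card := by
      refine Finset.card_pos.2 ⟨1, ?_⟩
      simp only [Finset.mem_filter, Finset.mem_Icc]
      exact ⟨⟨le_refl 1, hK⟩, by simp⟩
    calc (1:ℝ) = (if 1 ≤ ((Finset.Icc 1 K).filter (fun k => z k = z 1)).card
          then (1:ℝ) else 0) := by rw [if_pos h1]
      _ ≤ _ := Finset.single_le_sum
          (f := fun v => (if 1 ≤ ((Finset.Icc 1 K).filter (fun k => z k = v)).card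
            then (1:ℝ) else 0))
          (fun v _ => by positivity) (Finset.mem_univ (z 1))
  calc ∑ v : Z, ∑ k ∈ (Finset.Icc 1 K).filter (fun k => z k = v),
        1 / Real.sqrt ((max 1 (((Finset.Icc 1 k).filter (fun t => z t = z k)).card) : ℕ))
      ≤ ∑ v : Z, (2 * Real.sqrt (((Finset.Icc 1 K).filter (fun k => z k = v)).card) -
          (if 1 ≤ ((Finset.Icc 1 K).filter (fun k => z k = v)).card then (1:ℝ) else 0)) :=
        Finset.sum_le_sum fun v _ => (fiber_bound' z K v).trans (sum_one_div_sqrt_le _)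
    _ = 2 * (∑ v : Z, Real.sqrt (((Finset.Icc 1 K).filter (fun k => z k = v)).card)) -
          ∑ v : Z, (if 1 ≤ ((Finset.Icc 1 K).filter (fun k => z k = v)).card
            then (1:ℝ) else 0) := by
        rw [Finset.sum_sub_distrib, Finset.mul_sum]
    _ ≤ 2 * Real.sqrt ((Fintype.card Z : ℝ) * K) - 1 := by linarith
    _ < 2 * Real.sqrt ((K : ℝ) * (Fintype.card Z : ℝ)) := by
        rw [mul_comm (K : ℝ)]
        linarith
end

section
/- For every h ∈ {1,…,H}, every observable history f_h = (a_1, o_2, …, a_{h−1}, o_h), every action a_h ∈ A, every observation o_{h+1} ∈ O, and every state s_{h+1} ∈ S, the risk belief satisfies the evolution law σ_{h+1}(s_{h+1}; (f_h, a_h, o_{h+1})) = ∑_{s_h ∈ S} T_{h,a_h}(s_{h+1}|s_h) · (O_{h+1}(o_{h+1}|s_{h+1}) / O'(o_{h+1})) · exp(γ·r_h(s_h, a_h)) · σ_h(s_h; f_h). -/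
open Finset

noncomputable section

/-- The (unnormalized) risk belief `σ_{n+1}(s; f_{n+1})` (paper index `h = n+1`):
`σ_h(s_h; f_h) = ∑_{s_{1:h-1}} μ₁(s₁) ∏ T ∏ (O/O') e^{γ ∑ r}`, where `acts t` is the
paper action `a_{t+1}` and `obs t` is the paper observation `o_{t+2}`. -/
def riskBelief {S O A : Type*} [Fintype S] (μ : S → ℝ) (Ttr : ℕ → A → S → S → ℝ)
    (Oem : ℕ → O → S → ℝ) (Oref : O → ℝ) (rew : ℕ → S → A → ℝ) (γ : ℝ)
    (n : ℕ) (acts : ℕ → A) (obs : ℕ → O) (s : S) : ℝ :=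
  ∑ p : Fin n → S,
    let q : Fin (n + 1) → S := Fin.snoc p s
    (μ (q 0) * ∏ t : Fin n, Ttr t (acts t) (q t.castSucc) (q t.succ)) *
      ((∏ t : Fin n, (Oem t (obs t) (q t.succ) / Oref (obs t))) *
        Real.exp (γ * ∑ t : Fin n, rew t (q t.castSucc) (acts t)))

/-- Evolution law of the risk belief: for every step `h ∈ {1,…,H}` (here `n = h - 1`),
history, action `a_h = acts n`, observation `o_{h+1} = obs n` and state `s_{h+1} = s'`,
`σ_{h+1}(s_{h+1}; (f_h,a_h,o_{h+1})) = ∑_{s_h} T_{h,a_h}(s_{h+1}|s_h) ·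
(O_{h+1}(o_{h+1}|s_{h+1})/O'(o_{h+1})) · e^{γ r_h(s_h,a_h)} · σ_h(s_h; f_h)`. -/
theorem riskBelief_evolution {S O A : Type*}
    [Fintype S] [Fintype O] [Fintype A] [Nonempty S] [Nonempty O] [Nonempty A]
    (H : ℕ) (hH : 1 ≤ H) (γ : ℝ) (hγ : γ ≠ 0)
    (μ : S → ℝ) (Ttr : ℕ → A → S → S → ℝ) (Oem : ℕ → O → S → ℝ) (Oref : O → ℝ)
    (rew : ℕ → S → A → ℝ)
    (hμ0 : ∀ s, 0 ≤ μ s) (hμ1 : ∑ s, μ s = 1)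
    (hT0 : ∀ h, h < H → ∀ a s s', 0 ≤ Ttr h a s s')
    (hT1 : ∀ h, h < H → ∀ a s, ∑ s', Ttr h a s s' = 1)
    (hO0 : ∀ t, t < H → ∀ o s, 0 ≤ Oem t o s)
    (hO1 : ∀ t, t < H → ∀ s, ∑ o, Oem t o s = 1)
    (hOref0 : ∀ o, 0 < Oref o) (hOref1 : ∑ o, Oref o = 1)
    (hr : ∀ h, h < H → ∀ s a, rew h s a ∈ Set.Icc (0 : ℝ) 1) :
    ∀ n, n < H → ∀ (acts : ℕ → A) (obs : ℕ → O) (s' : S),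
      riskBelief μ Ttr Oem Oref rew γ (n + 1) acts obs s' =
        ∑ s : S, Ttr n (acts n) s s' * (Oem n (obs n) s' / Oref (obs n)) *
          Real.exp (γ * rew n s (acts n)) * riskBelief μ Ttr Oem Oref rew γ n acts obs s := by
  intro n hn acts obs s'
  unfold riskBelief
  rw [← (Fin.snocEquiv (fun _ : Fin (n+1) => S)).sum_comp, Fintype.sum_prod_type]
  simp only [Fin.snocEquiv, Equiv.coe_fn_mk, mul_sum]
  refine Finset.sum_congr rfl fun s _ => Finset.sum_congr rfl fun p _ => ?_
  simp only [Fin.prod_univ_castSucc, Fin.sum_univ_castSucc, Fin.snoc_castSucc,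
    Fin.snoc_last, Fin.succ_castSucc, Fin.succ_last, mul_add, Real.exp_add]
  by_cases hn0 : n = 0
  · subst hn0; simp [Fin.snoc]; ring
  · obtain ⟨m, rfl⟩ := Nat.exists_eq_succ_of_ne_zero hn0
    simp only [show (0 : Fin (m+1+1+1)) = Fin.castSucc (Fin.castSucc 0) from rfl,
      show (0 : Fin (m+1+1)) = Fin.castSucc 0 from rfl,
      Fin.snoc_castSucc, Fin.coe_castSucc, Fin.val_last]
    ring

end
end

section
/- Let π = (π_h)_{h=1}^H be a deterministic policy and let β^π be defined as the reference-model conditional expectation of the conjugate beliefs. Then β^π satisfies the Markovian backward recursion: β^π_{H+1}(s; f_{H+1}) = 1 for all s and f_{H+1}, and for every h ∈ {1,…,H}, every observable history f_h and every s_h ∈ S, β^π_h(s_h; f_h) = exp(γ·r_h(s_h, a_h)) · ∑_{s_{h+1} ∈ S} T_{h,a_h}(s_{h+1}|s_h) · ∑_{o_{h+1} ∈ O} O_{h+1}(o_{h+1}|s_{h+1}) · β^π_{h+1}(s_{h+1}; (f_h, a_h, o_{h+1})), where a_h = π_h(f_h). -/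
open Finset

noncomputable section

variable {S O A : Type*}

/-- Truncation of a sequence: keep the first `n` values, fill the rest with junk. -/
def truncSeq {X : Type*} [Nonempty X] (f : ℕ → X) (n : ℕ) : ℕ → X :=
  fun t => if t < n then f t else Classical.arbitrary X

/-- Action sequence generated by a policy `π` from observations `obs`, keeping the
prescribed actions `acts` at indices `< n₀`.  At step `n`, the policy only sees the
actions at indices `< n` and the observations at indices `< n`. -/
def genAct [Nonempty A] [Nonempty O] (π : ℕ → (ℕ → A) → (ℕ → O) → A)
    (acts : ℕ → A) (obs : ℕ → O) (n₀ : ℕ) : ℕ → A :=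
  fun n => Nat.strongRecOn n (fun n ih =>
    if n < n₀ then acts n
    else π n (fun t => if ht : t < n then ih t ht else Classical.arbitrary A)
             (fun t => if t < n then obs t else Classical.arbitrary O))

/-- The action chosen by the policy `π` at step `m` given the observable history
recorded in `acts` (indices `< m`) and `obs` (indices `< m`). -/
def polAct [Nonempty A] [Nonempty O] (π : ℕ → (ℕ → A) → (ℕ → O) → A)
    (acts : ℕ → A) (obs : ℕ → O) (m : ℕ) : A :=
  π m (truncSeq acts m) (truncSeq obs m)

/-- Splicing a tail of `k` observations after the first `m` observations of `obs`. -/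
def splice [Nonempty O] (obs : ℕ → O) (m : ℕ) {k : ℕ} (tail : Fin k → O) : ℕ → O :=
  fun t => if t < m then obs t
    else if h : t - m < k then tail ⟨t - m, h⟩ else Classical.arbitrary O
theorem genAct_unfold [Nonempty A] [Nonempty O] (π : ℕ → (ℕ → A) → (ℕ → O) → A)
    (acts : ℕ → A) (obs : ℕ → O) (n₀ n : ℕ) :
    genAct π acts obs n₀ n =
      if n < n₀ then acts n
      else π n (fun t => if t < n then genAct π acts obs n₀ t else Classical.arbitrary A)
               (fun t => if t < n then obs t else Classical.arbitrary O) := by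
  simp only [genAct, Nat.strongRecOn]
  rw [WellFounded.fix_eq]
  simp only [dite_eq_ite]

theorem genAct_lt [Nonempty A] [Nonempty O] (π : ℕ → (ℕ → A) → (ℕ → O) → A)
    (acts : ℕ → A) (obs : ℕ → O) {n₀ n : ℕ} (h : n < n₀) :
    genAct π acts obs n₀ n = acts n := by
  rw [genAct_unfold]; simp [h]

theorem splice_cons [Nonempty O] (obs : ℕ → O) (m k : ℕ) (o' : O) (tail : Fin k → O) :
    splice obs m (Fin.cons o' tail) = splice (Function.update obs m o') (m+1) tail := by
  funext t
  unfold splice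
  rcases lt_trichotomy t m with h|h|h
  · simp [h, Nat.lt_succ_of_lt h, Function.update_of_ne (by omega : t ≠ m)]
  · subst h
    have h1 : ¬ t < t := lt_irrefl t
    have h2 : t < t + 1 := Nat.lt_succ_self t
    have h3 : t - t = 0 := Nat.sub_self t
    simp only [h1, if_false, h2, if_true, h3, Nat.zero_lt_succ, dif_pos,
      Function.update_self]
    exact Fin.cons_zero (α := fun _ => O) o' tail
  · have h1 : ¬ t < m := by omega
    have h2 : ¬ t < m + 1 := by omega
    simp only [h1, if_false, h2]
    by_cases h3 : t - (m+1) < k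
    · have h4 : t - m < k + 1 := by omega
      rw [dif_pos h4, dif_pos h3]
      have : (⟨t - m, h4⟩ : Fin (k+1)) = Fin.succ ⟨t - (m+1), h3⟩ := by
        ext; simp; omega
      rw [this, Fin.cons_succ]
    · have h4 : ¬ t - m < k + 1 := by omega
      rw [dif_neg h4, dif_neg h3]

theorem genAct_succ [Nonempty A] [Nonempty O] (π : ℕ → (ℕ → A) → (ℕ → O) → A)
    (acts : ℕ → A) (obs : ℕ → O) (m : ℕ) :
    genAct π (Function.update acts m (genAct π acts obs m m)) obs (m+1) =
      genAct π acts obs m := by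
  funext n
  induction n using Nat.strongRecOn with
  | _ n ih =>
    set g := genAct π acts obs m m with hg
    rw [genAct_unfold, genAct_unfold π acts obs m n]
    rcases lt_trichotomy n m with h|h|h
    · simp [h, Nat.lt_succ_of_lt h, Function.update_of_ne (by omega : n ≠ m)]
    · subst h
      simp only [Nat.lt_succ_self, if_true, Function.update_self]
      conv_lhs => rw [hg, genAct_unfold]
    · have h1 : ¬ n < m := by omega
      have h2 : ¬ n < m + 1 := by omega
      simp only [h1, if_false, h2]
      congr 1
      funext t
      by_cases ht : t < n
      · simp only [ht, if_true]; exact ih t ht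
      · simp [ht]

theorem genAct_self [Nonempty A] [Nonempty O] (π : ℕ → (ℕ → A) → (ℕ → O) → A)
    (acts : ℕ → A) (obs obs2 : ℕ → O) (m : ℕ) (hobs : ∀ t, t < m → obs2 t = obs t) :
    genAct π acts obs2 m m = polAct π acts obs m := by
  rw [genAct_unfold]
  simp only [lt_irrefl, if_false]
  unfold polAct truncSeq
  congr 1
  · funext t
    by_cases ht : t < m
    · simp [ht, genAct_lt π acts obs2 ht]
    · simp [ht]
  · funext t
    by_cases ht : t < m
    · simp [ht, hobs t ht]
    · simp [ht]

/-- The conjugate belief `ν` (paper index `t = m+1`) with `k` steps remaining: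
`ν_t(s_t) = (e^{γ r_t(s_t,a_t)}/O'(o_{t+1})) ∑_{s'} T_{t,a_t}(s'|s_t) O_{t+1}(o_{t+1}|s') ν_{t+1}(s')`. -/
def conjBelief [Fintype S] (γ : ℝ) (rew : ℕ → S → A → ℝ) (Ttr : ℕ → A → S → S → ℝ)
    (Oem : ℕ → O → S → ℝ) (Oref : O → ℝ) :
    ℕ → ℕ → (ℕ → A) → (ℕ → O) → S → ℝ
  | 0, _, _, _, _ => 1
  | k + 1, m, acts, obs, s =>
      (Real.exp (γ * rew m s (acts m)) / Oref (obs m)) *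
        ∑ s' : S, Ttr m (acts m) s s' * Oem m (obs m) s' *
          conjBelief γ rew Ttr Oem Oref k (m + 1) acts obs s'

/-- The beta vector `β^π_{m+1}(s; f_{m+1})`, the reference-model conditional expectation
of the conjugate belief: `β^π_h(s; f_h) = ∑_{o_{h+1:H+1}} (∏ O'(o_t)) ν_h(s; ·)`, with
the actions generated from the history and the observations by the policy `π`. -/
def betaVec [Fintype S] [Fintype O] [Nonempty A] [Nonempty O]
    (γ : ℝ) (rew : ℕ → S → A → ℝ) (Ttr : ℕ → A → S → S → ℝ)
    (Oem : ℕ → O → S → ℝ) (Oref : O → ℝ) (H : ℕ)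
    (π : ℕ → (ℕ → A) → (ℕ → O) → A)
    (m : ℕ) (acts : ℕ → A) (obs : ℕ → O) (s : S) : ℝ :=
  ∑ tail : Fin (H - m) → O,
    (∏ j, Oref (tail j)) *
      conjBelief γ rew Ttr Oem Oref (H - m) m
        (genAct π acts (splice obs m tail) m) (splice obs m tail) s


theorem sum_algebra {O' T' S' : Type*} [Fintype O'] [Fintype T'] [Fintype S']
    (E : ℝ) (w : O' → ℝ) (hw : ∀ o, w o ≠ 0) (P : T' → ℝ) (T : S' → ℝ)
    (Q : O' → S' → ℝ) (C : O' → T' → S' → ℝ) :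
    ∑ o, ∑ tl, (w o * P tl) * ((E / w o) * ∑ s', T s' * Q o s' * C o tl s')
      = E * ∑ s', T s' * ∑ o, Q o s' * ∑ tl, P tl * C o tl s' := by
  have h1 : ∀ o tl, (w o * P tl) * ((E / w o) * ∑ s', T s' * Q o s' * C o tl s')
      = ∑ s', E * (T s' * (Q o s' * (P tl * C o tl s'))) := by
    intro o tl
    rw [Finset.mul_sum, Finset.mul_sum]
    apply Finset.sum_congr rfl
    intro s' _
    have h := hw o
    field_simp
  simp only [h1]
  simp only [Finset.mul_sum]
  exact (Finset.sum_congr rfl fun o _ => Finset.sum_comm).trans Finset.sum_comm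
/-- The beta vector satisfies the Markovian backward recursion:
`β^π_{H+1} = 1` and `β^π_h(s_h; f_h) = e^{γ r_h(s_h,a_h)} ∑_{s'} T_{h,a_h}(s'|s_h)
∑_{o'} O_{h+1}(o'|s') β^π_{h+1}(s'; (f_h,a_h,o'))` with `a_h = π_h(f_h)`
(paper step `h` is index `m = h - 1`). -/
theorem betaVec_backward_recursion
    [Fintype S] [Fintype O] [Fintype A] [Nonempty S] [Nonempty O] [Nonempty A]
    (H : ℕ) (hH : 1 ≤ H) (γ : ℝ) (hγ : γ ≠ 0)
    (μ : S → ℝ) (Ttr : ℕ → A → S → S → ℝ) (Oem : ℕ → O → S → ℝ) (Oref : O → ℝ)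
    (rew : ℕ → S → A → ℝ)
    (hμ0 : ∀ s, 0 ≤ μ s) (hμ1 : ∑ s, μ s = 1)
    (hT0 : ∀ h, h < H → ∀ a s s', 0 ≤ Ttr h a s s')
    (hT1 : ∀ h, h < H → ∀ a s, ∑ s', Ttr h a s s' = 1)
    (hO0 : ∀ t, t < H → ∀ o s, 0 ≤ Oem t o s)
    (hO1 : ∀ t, t < H → ∀ s, ∑ o, Oem t o s = 1)
    (hOref0 : ∀ o, 0 < Oref o) (hOref1 : ∑ o, Oref o = 1)
    (hr : ∀ h, h < H → ∀ s a, rew h s a ∈ Set.Icc (0 : ℝ) 1)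
    (π : ℕ → (ℕ → A) → (ℕ → O) → A) :
    (∀ (acts : ℕ → A) (obs : ℕ → O) (s : S),
        betaVec γ rew Ttr Oem Oref H π H acts obs s = 1) ∧
    (∀ m, m < H → ∀ (acts : ℕ → A) (obs : ℕ → O) (s : S),
        betaVec γ rew Ttr Oem Oref H π m acts obs s =
          Real.exp (γ * rew m s (polAct π acts obs m)) *
            ∑ s' : S, Ttr m (polAct π acts obs m) s s' *
              ∑ o' : O, Oem m o' s' *
                betaVec γ rew Ttr Oem Oref H π (m + 1)
                  (Function.update acts m (polAct π acts obs m))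
                  (Function.update obs m o') s') := by
  constructor
  · intro acts obs s
    have h0 : H - H = 0 := Nat.sub_self H
    simp only [betaVec]
    rw [h0]
    simp [conjBelief]
  · intro m hm acts obs s
    have hk : H - m = (H - m - 1) + 1 := by omega
    set k := H - m - 1 with hkdef
    have hk' : H - (m+1) = k := by omega
    set a := polAct π acts obs m with ha
    have hterm : ∀ (o' : O) (tl : Fin k → O),
        (∏ j, Oref (Fin.cons (α := fun _ => O) o' tl j)) *
          conjBelief γ rew Ttr Oem Oref (k+1) m
            (genAct π acts (splice obs m (Fin.cons (α := fun _ => O) o' tl)) m)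
            (splice obs m (Fin.cons (α := fun _ => O) o' tl)) s
        = (Oref o' * ∏ j, Oref (tl j)) *
            ((Real.exp (γ * rew m s a) / Oref o') *
              ∑ s', Ttr m a s s' * Oem m o' s' *
                conjBelief γ rew Ttr Oem Oref k (m+1)
                  (genAct π (Function.update acts m a)
                    (splice (Function.update obs m o') (m+1) tl) (m+1))
                  (splice (Function.update obs m o') (m+1) tl) s') := by
      intro o' tl
      have hsp : splice obs m (Fin.cons o' tl) =
          splice (Function.update obs m o') (m+1) tl := splice_cons obs m k o' tl
      have hspm : splice obs m (Fin.cons o' tl) m = o' := by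
        unfold splice
        simp only [lt_irrefl, if_false, Nat.sub_self, Nat.zero_lt_succ, dif_pos]
        exact Fin.cons_zero (α := fun _ => O) o' tl
      have hactm : genAct π acts (splice obs m (Fin.cons o' tl)) m m = a := by
        rw [ha]
        exact genAct_self π acts obs _ m (fun t ht => by simp [splice, ht])
      have hact : genAct π acts (splice obs m (Fin.cons o' tl)) m
          = genAct π (Function.update acts m a)
              (splice obs m (Fin.cons o' tl)) (m+1) := by
        conv_rhs => rw [← hactm]
        exact (genAct_succ π acts _ m).symm
      rw [conjBelief, Fin.prod_univ_succ]
      simp only [Fin.cons_zero, Fin.cons_succ]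
      rw [hactm, hspm, hact, hsp]
    have hcons : ∀ (p : O × (Fin k → O)),
        (Fin.consEquiv fun _ : Fin (k+1) => O) p = Fin.cons p.1 p.2 := fun _ => rfl
    simp only [betaVec]
    rw [hk, hk']
    rw [← Equiv.sum_comp (Fin.consEquiv fun _ : Fin (k+1) => O), Fintype.sum_prod_type]
    simp only [hcons]
    simp only [hterm]
    exact sum_algebra _ Oref (fun o => (hOref0 o).ne') _ _ _ _

end
end

section
/- In a finite-horizon tabular MDP with a deterministic policy, the dynamic and static entropic-risk value functions coincide: for every h ∈ {1,…,H+1} and every s ∈ S, V_h(s) = V^{stat}_h(s). -/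
open Finset

noncomputable section

variable {S A : Type*}

/-- The dynamic entropic-risk value function of a deterministic policy `π` in a tabular
MDP (first argument: number of steps remaining; second argument: current step index
`m = h - 1`): `V_{H+1} = 0`, `Q_h(s,a) = r_h(s,a) + (1/γ)·ln ∑_{s'} P_h(s'|s,a)·e^{γ V_{h+1}(s')}`
and `V_h(s) = Q_h(s, π_h(s))`. -/
def vDyn [Fintype S] (γ : ℝ) (P : ℕ → S → A → S → ℝ) (r : ℕ → S → A → ℝ)
    (π : ℕ → S → A) : ℕ → ℕ → S → ℝ
  | 0, _, _ => 0
  | k + 1, m, s =>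
      r m s (π m s) +
        (1 / γ) * Real.log (∑ s' : S, P m s (π m s) s' *
          Real.exp (γ * vDyn γ P r π k (m + 1) s'))

/-- The static entropic-risk value function of a deterministic policy `π` in a tabular
MDP (first argument: number of steps remaining; second argument: current step index
`m = h - 1`): `V^{stat}_h(s) = (1/γ)·ln ∑_{s_{h+1:H+1}} ∏_t P_t(s_{t+1}|s_t,π_t(s_t)) ·
e^{γ ∑_t r_t(s_t,π_t(s_t))}` with `s_h := s` (and `V^{stat}_{H+1} = 0`). -/
def vStat [Fintype S] (γ : ℝ) (P : ℕ → S → A → S → ℝ) (r : ℕ → S → A → ℝ)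
    (π : ℕ → S → A) (k m : ℕ) (s : S) : ℝ :=
  (1 / γ) * Real.log (∑ p : Fin k → S,
    let q : Fin (k + 1) → S := Fin.cons s p
    (∏ t : Fin k, P (m + ↑t) (q t.castSucc) (π (m + ↑t) (q t.castSucc)) (q t.succ)) *
      Real.exp (γ * ∑ t : Fin k, r (m + ↑t) (q t.castSucc) (π (m + ↑t) (q t.castSucc))))

lemma exp_vDyn [Fintype S] (γ : ℝ) (hγ : γ ≠ 0) (H : ℕ)
    (P : ℕ → S → A → S → ℝ) (r : ℕ → S → A → ℝ) (π : ℕ → S → A)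
    (hP0 : ∀ h, h < H → ∀ s a s', 0 ≤ P h s a s')
    (hP1 : ∀ h, h < H → ∀ s a, ∑ s', P h s a s' = 1) :
    ∀ k m, m + k ≤ H → ∀ s : S,
      Real.exp (γ * vDyn γ P r π k m s) = ∑ p : Fin k → S,
        (∏ t : Fin k, P (m + ↑t) ((Fin.cons s p : Fin (k+1) → S) t.castSucc)
            (π (m + ↑t) ((Fin.cons s p : Fin (k+1) → S) t.castSucc))
            ((Fin.cons s p : Fin (k+1) → S) t.succ)) *
          Real.exp (γ * ∑ t : Fin k, r (m + ↑t) ((Fin.cons s p : Fin (k+1) → S) t.castSucc)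
            (π (m + ↑t) ((Fin.cons s p : Fin (k+1) → S) t.castSucc))) := by
  intro k
  induction k with
  | zero =>
      intro m _ s
      simp [vDyn]
  | succ k ih =>
      intro m hm s
      have hmH : m < H := by omega
      have hm1 : (m + 1) + k ≤ H := by omega
      -- positivity of the inner sum
      have hpos : 0 < ∑ s' : S, P m s (π m s) s' *
          Real.exp (γ * vDyn γ P r π k (m + 1) s') := by
        obtain ⟨s₀, -, hs₀⟩ := Finset.exists_lt_of_sum_lt (s := (univ : Finset S))
          (f := fun _ => (0 : ℝ)) (g := fun s' => P m s (π m s) s')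
          (by simp [hP1 m hmH s (π m s)])
        refine Finset.sum_pos' (fun i _ => ?_) ⟨s₀, Finset.mem_univ _, ?_⟩
        · exact mul_nonneg (hP0 m hmH _ _ _) (Real.exp_pos _).le
        · exact mul_pos hs₀ (Real.exp_pos _)
      have hexp : Real.exp (γ * vDyn γ P r π (k + 1) m s)
          = Real.exp (γ * r m s (π m s)) *
            ∑ s' : S, P m s (π m s) s' * Real.exp (γ * vDyn γ P r π k (m + 1) s') := by
        rw [show vDyn γ P r π (k+1) m s = r m s (π m s) +
          (1 / γ) * Real.log (∑ s' : S, P m s (π m s) s' *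
            Real.exp (γ * vDyn γ P r π k (m + 1) s')) from rfl]
        rw [mul_add, Real.exp_add]
        congr 1
        rw [show γ * ((1/γ) * Real.log _) = Real.log (∑ s' : S, P m s (π m s) s' *
            Real.exp (γ * vDyn γ P r π k (m + 1) s')) by field_simp]
        exact Real.exp_log hpos
      rw [hexp]
      -- rewrite RHS: split p : Fin (k+1) → S into (s', p')
      rw [← Equiv.sum_comp (Fin.consEquiv (fun _ : Fin (k + 1) => S)), Fintype.sum_prod_type]
      rw [Finset.mul_sum]
      congr 1; funext s'
      rw [ih (m + 1) hm1 s', Finset.mul_sum, Finset.mul_sum]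
      congr 1; funext p
      have hce : ((Fin.consEquiv fun _ : Fin (k + 1) => S) (s', p)) = Fin.cons s' p := rfl
      rw [hce]
      rw [Fin.prod_univ_succ, Fin.sum_univ_succ]
      have hq : ∀ t : Fin k,
          (Fin.cons s (Fin.cons s' p) : Fin (k+2) → S) t.succ.castSucc
            = (Fin.cons s' p : Fin (k+1) → S) t.castSucc := by
        intro t
        rw [← Fin.succ_castSucc, Fin.cons_succ]
      have hq2 : ∀ t : Fin k,
          (Fin.cons s (Fin.cons s' p) : Fin (k+2) → S) t.succ.succ
            = (Fin.cons s' p : Fin (k+1) → S) t.succ := by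
        intro t; rw [Fin.cons_succ]
      have harith : ∀ t : Fin k, m + (↑t + 1) = m + 1 + ↑t := fun t => by omega
      simp only [Fin.cons_zero, Fin.cons_succ, Fin.castSucc_zero, Fin.val_zero, add_zero,
        Fin.val_succ, hq, hq2, harith]
      rw [mul_add γ, Real.exp_add]
      ring


/-- In a finite-horizon tabular MDP with a deterministic policy, the dynamic and static
entropic-risk value functions coincide: `V_h(s) = V^{stat}_h(s)` for every
`h ∈ {1,…,H+1}` (index `m = h - 1`) and every state `s`. -/
theorem vDyn_eq_vStat [Fintype S] [Fintype A] [Nonempty S] [Nonempty A]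
    (H : ℕ) (hH : 1 ≤ H) (γ : ℝ) (hγ : γ ≠ 0)
    (P : ℕ → S → A → S → ℝ) (r : ℕ → S → A → ℝ) (π : ℕ → S → A)
    (hP0 : ∀ h, h < H → ∀ s a s', 0 ≤ P h s a s')
    (hP1 : ∀ h, h < H → ∀ s a, ∑ s', P h s a s' = 1) :
    ∀ m, m ≤ H → ∀ s : S, vDyn γ P r π (H - m) m s = vStat γ P r π (H - m) m s := by
  intro m hm s
  have hk : m + (H - m) ≤ H := by omega
  have h1 := exp_vDyn γ hγ H P r π hP0 hP1 (H - m) m hk s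
  have h2 : vDyn γ P r π (H - m) m s
      = (1 / γ) * Real.log (Real.exp (γ * vDyn γ P r π (H - m) m s)) := by
    rw [Real.log_exp]; field_simp
  rw [h2, h1]; rfl

end
end
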